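/- Let G be a finite group with a normal subgroup F and quotient B = G/F, where F is either cyclic or dihedral and B is either cyclic or dihedral. Suppose further that for every g ∈ G and every h ∈ F generating a characteristic cyclic subgroup ⟨h⟩ of F, conjugation satisfies g h g^{-1} ∈ {h, h^{-1}}. Then G contains a normal abelian subgroup of index at most 32. -/

import Mathlib

/-!
We find a normal subgroup `K` of index at most 6 in which `F ⊓ K` is central. If `F` has a
self-centralizing characteristic cyclic subgroup `⟨x⟩` (a generator of a cyclic `F`, the rotation
`r 1` of a dihedral `F` of order at least 6), then `x` has at most the two conjugates `x, x⁻¹`, so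
its centralizer has index at most 2 and serves as `K`. For the Klein four-group `F` take for `K`
the kernel of the conjugation action on `F`, of index at most `|Aut F| ≤ 3! = 6`.
Then `G ⧸ F` has a cyclic subgroup `⟨b⟩` of index at most 2, and the preimage of `⟨b⟩` in `K` is
abelian, being a cyclic extension of a central subgroup; its index is at most `6 * 2`.
-/

open Subgroup
open scoped Nat

namespace Subgroup

variable {G : Type*} [Group G]

theorem normal_of_index_le_two {H : Subgroup G} [H.FiniteIndex] (h : H.index ≤ 2) :
    H.Normal := by
  obtain h1 | h2 : H.index = 1 ∨ H.index = 2 := by have := H.index_ne_zero_of_finite; omega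
  exacts [normal_of_index_eq_one h1, normal_of_index_eq_two h2]

theorem index_centralizer_singleton_le_two {x : G}
    (hx : ∀ g : G, g * x * g⁻¹ = x ∨ g * x * g⁻¹ = x⁻¹) : (centralizer {x}).index ≤ 2 := by
  have horbit : MulAction.orbit (ConjAct G) x ⊆ {x, x⁻¹} := fun y hy => by
    obtain ⟨g, rfl⟩ := isConj_iff.1 (ConjAct.mem_orbit_conjAct.1 hy).symm
    exact hx g
  have hindex := MulAction.index_stabilizer (ConjAct G) x
  rw [ConjAct.stabilizer_eq_centralizer] at hindex
  change (centralizer {x}).index = _ at hindex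
  rw [hindex]
  calc _ ≤ ({x, x⁻¹} : Set G).ncard := Set.ncard_le_ncard horbit (Set.toFinite _)
    _ ≤ ({x⁻¹} : Set G).ncard + 1 := Set.ncard_insert_le _ _
    _ = 2 := by rw [Set.ncard_singleton]

theorem inf_centralizer_singleton_le_centralizer {F : Subgroup G} {x : F}
    (hx : ∀ y : F, Commute y x → y ∈ zpowers x) :
    F ⊓ centralizer {(x : G)} ≤ centralizer (centralizer {(x : G)} : Set G) := by
  rintro y ⟨hyF, hyx⟩
  obtain ⟨k, hk⟩ :=
    mem_zpowers_iff.1 <| hx ⟨y, hyF⟩ <| Subtype.ext (mem_centralizer_singleton_iff.1 hyx)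
  rw [show y = (x : G) ^ k from congrArg Subtype.val hk.symm]
  exact zpow_mem (mem_centralizer_iff.2 fun _ hg => mem_centralizer_singleton_iff.1 hg) k

theorem exists_normal_index_le_two_inf_le_centralizer [Finite G] {F : Subgroup G} (x : F)
    (hconj : ∀ g : G, g * x * g⁻¹ = x ∨ g * x * g⁻¹ = x⁻¹)
    (hcent : ∀ y : F, Commute y x → y ∈ zpowers x) :
    ∃ K : Subgroup G, K.Normal ∧ K.index ≤ 2 ∧ F ⊓ K ≤ centralizer K :=
  ⟨_, normal_of_index_le_two (index_centralizer_singleton_le_two hconj),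
    index_centralizer_singleton_le_two hconj, inf_centralizer_singleton_le_centralizer hcent⟩

theorem Characteristic.map_mulEquiv {G' : Type*} [Group G'] {H : Subgroup G}
    [hH : H.Characteristic] (e : G ≃* G') : (H.map e.toMonoidHom).Characteristic := by
  refine characteristic_iff_comap_le.2 fun σ y hy => ?_
  rw [mem_comap, mem_map_equiv] at hy
  rw [mem_map_equiv]
  simpa using characteristic_iff_le_comap.1 hH (e.trans (σ.symm.trans e.symm)) hy

end Subgroup

theorem MulAut.card_le_factorial (F : Type*) [Group F] [Finite F] :
    Nat.card (MulAut F) ≤ (Nat.card F - 1)! := by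
  let restrict (σ : MulAut F) : Equiv.Perm {y : F // y ≠ 1} :=
    Equiv.Perm.subtypePerm σ.toEquiv fun _ => σ.map_ne_one_iff
  have hrestrict : Function.Injective restrict := fun σ ψ h => by
    ext y
    by_cases hy : y = 1
    · simp [hy]
    · simpa [restrict] using congrArg (fun p => (p ⟨y, hy⟩ : F)) h
  have hcard : Nat.card {y : F // y ≠ 1} + 1 = Nat.card F := by
    classical
    rw [← Finite.card_option, Nat.card_congr (Equiv.optionSubtypeNe 1)]
  calc Nat.card (MulAut F) ≤ Nat.card (Equiv.Perm {y : F // y ≠ 1}) :=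
        Nat.card_le_card_of_injective _ hrestrict
    _ = (Nat.card F - 1)! := by rw [Nat.card_perm, ← hcard, Nat.add_sub_cancel]

section conjNormal

variable {G : Type*} [Group G] (F : Subgroup G) [F.Normal]

theorem index_ker_conjNormal_le [Finite F] :
    (MulAut.conjNormal : G →* MulAut F).ker.index ≤ (Nat.card F - 1)! := by
  rw [index_ker]
  exact (card_le_card_group _).trans (MulAut.card_le_factorial F)

theorem le_centralizer_ker_conjNormal :
    F ≤ centralizer (MulAut.conjNormal : G →* MulAut F).ker := fun y hy k hk => by
  have := congrArg (fun σ : MulAut F ↦ (σ ⟨y, hy⟩ : G)) (MonoidHom.mem_ker.1 hk)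
  simp only [MulAut.conjNormal_apply, MulAut.one_apply] at this
  exact mul_inv_eq_iff_eq_mul.1 this

end conjNormal

namespace DihedralGroup

variable {n : ℕ}

theorem r_mem_zpowers_r_one (i : ZMod n) : r i ∈ zpowers (r 1 : DihedralGroup n) :=
  mem_zpowers_iff.2 ⟨i.cast, by rw [r_one_zpow, ZMod.intCast_zmod_cast]⟩

theorem sr_notMem_zpowers_r_one (i : ZMod n) : sr i ∉ zpowers (r 1 : DihedralGroup n) := by
  intro h
  obtain ⟨k, hk⟩ := mem_zpowers_iff.1 h
  rw [r_one_zpow] at hk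
  cases hk

theorem index_zpowers_r_one : (zpowers (r 1 : DihedralGroup n)).index = 2 :=
  index_eq_two_iff_exists_notMem_and.2 ⟨sr 0, sr_notMem_zpowers_r_one 0, fun
    | r i => Or.inr (r_mem_zpowers_r_one i)
    | sr i => Or.inl (by rw [sr_mul_sr]; exact r_mem_zpowers_r_one _)⟩

theorem characteristic_zpowers_r_one (hn : n ≠ 2) :
    (zpowers (r 1 : DihedralGroup n)).Characteristic := by
  refine characteristic_iff_map_le.2 fun σ => ?_
  rw [MonoidHom.map_zpowers, zpowers_le, MulEquiv.coe_toMonoidHom]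
  have hord : orderOf (σ (r 1)) = n := by rw [MulEquiv.orderOf_eq, orderOf_r_one]
  cases h : σ (r 1) with
  | r i => exact r_mem_zpowers_r_one i
  | sr i => rw [h, orderOf_sr] at hord; exact absurd hord.symm hn

theorem mem_zpowers_r_one_of_commute (hn1 : n ≠ 1) (hn2 : n ≠ 2) {g : DihedralGroup n}
    (h : Commute g (r 1)) : g ∈ zpowers (r 1) := by
  cases g with
  | r i => exact r_mem_zpowers_r_one i
  | sr i =>
    have h' : sr (i + 1) = sr (i - 1) := by rw [← sr_mul_r, ← r_mul_sr]; exact h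
    have h2 : ((2 : ℕ) : ZMod n) = 0 := by
      injection h' with h'
      push_cast
      linear_combination h'
    rcases (Nat.dvd_prime Nat.prime_two).1 ((ZMod.natCast_eq_zero_iff 2 n).1 h2) with rfl | rfl
    · exact absurd rfl hn1
    · exact absurd rfl hn2

variable {H : Type*} [Group H] (e : H ≃* DihedralGroup n)

theorem zpowers_symm_r_one :
    zpowers (e.symm (r 1)) = (zpowers (r 1)).map (e.symm : DihedralGroup n →* H) :=
  (MonoidHom.map_zpowers (e.symm : DihedralGroup n →* H) (r 1)).symm

theorem characteristic_zpowers_symm_r_one (hn : n ≠ 2) :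
    (zpowers (e.symm (r 1))).Characteristic := by
  have := characteristic_zpowers_r_one hn
  rw [zpowers_symm_r_one]
  exact Characteristic.map_mulEquiv e.symm

theorem mem_zpowers_symm_r_one_of_commute (hn1 : n ≠ 1) (hn2 : n ≠ 2) {y : H}
    (h : Commute y (e.symm (r 1))) : y ∈ zpowers (e.symm (r 1)) := by
  have hcomm : Commute (e y) (r 1) := by simpa using h.map e
  rw [zpowers_symm_r_one]
  exact ⟨e y, mem_zpowers_r_one_of_commute hn1 hn2 hcomm, by simp⟩

end DihedralGroup

theorem exists_zpowers_index_le_two {B : Type*} [Group B]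
    (hB : IsCyclic B ∨ ∃ m, Nonempty (B ≃* DihedralGroup m)) : ∃ b : B, (zpowers b).index ≤ 2 := by
  rcases hB with hB | ⟨m, ⟨e⟩⟩
  · obtain ⟨b, hb⟩ := IsCyclic.exists_generator (α := B)
    exact ⟨b, by rw [(eq_top_iff' _).2 hb, index_top]; norm_num⟩
  · refine ⟨e.symm (DihedralGroup.r 1), ?_⟩
    rw [DihedralGroup.zpowers_symm_r_one, index_map_equiv, DihedralGroup.index_zpowers_r_one]

theorem isMulCommutative_inf_comap_zpowers {G : Type*} [Group G] {F K : Subgroup G} [F.Normal]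
    (hK : F ⊓ K ≤ centralizer K) (b : G ⧸ F) :
    IsMulCommutative (K ⊓ (zpowers b).comap (QuotientGroup.mk' F) : Subgroup G) := by
  set N := K ⊓ (zpowers b).comap (QuotientGroup.mk' F)
  let f : N →* zpowers b := ((QuotientGroup.mk' F).comp N.subtype).codRestrict _ fun a => a.2.2
  refine f.isMulCommutative_of_isCyclic_of_ker_le_center fun u hu => mem_center_iff.2 fun v => ?_
  have huF : (u : G) ∈ F :=
    (QuotientGroup.eq_one_iff _).1 (congrArg Subtype.val (MonoidHom.mem_ker.1 hu))
  exact Subtype.ext (hK ⟨huF, u.2.1⟩ v v.2.1)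

theorem exists_normal_index_le_six_inf_le_centralizer {G : Type*} [Group G] [Finite G]
    (F : Subgroup G) [F.Normal]
    (hF : IsCyclic F ∨ ∃ n, 2 ≤ n ∧ Nonempty (F ≃* DihedralGroup n))
    (hconj : ∀ h : F, (zpowers h).Characteristic →
      ∀ g : G, g * (h : G) * g⁻¹ = (h : G) ∨ g * (h : G) * g⁻¹ = (h : G)⁻¹) :
    ∃ K : Subgroup G, K.Normal ∧ K.index ≤ 6 ∧ F ⊓ K ≤ centralizer K := by
  rcases hF with hF | ⟨n, hn, ⟨e⟩⟩
  · obtain ⟨x, hx⟩ := IsCyclic.exists_generator (α := F)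
    have hchar : (zpowers x).Characteristic := by rw [(eq_top_iff' _).2 hx]; infer_instance
    obtain ⟨K, hKn, hKi, hFK⟩ :=
      exists_normal_index_le_two_inf_le_centralizer x (hconj x hchar) fun y _ => hx y
    exact ⟨K, hKn, by omega, hFK⟩
  obtain rfl | hn := hn.eq_or_lt
  · refine ⟨_, MonoidHom.normal_ker _, (index_ker_conjNormal_le F).trans ?_,
      inf_le_left.trans (le_centralizer_ker_conjNormal F)⟩
    rw [Nat.card_congr e.toEquiv, DihedralGroup.nat_card]
    decide
  · obtain ⟨K, hKn, hKi, hFK⟩ := exists_normal_index_le_two_inf_le_centralizer _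
      (hconj _ (DihedralGroup.characteristic_zpowers_symm_r_one e (by omega)))
      fun y => DihedralGroup.mem_zpowers_symm_r_one_of_commute e (by omega) (by omega)
    exact ⟨K, hKn, by omega, hFK⟩

/-- Let `G` be a finite group with a normal subgroup `F` such that `F` and `G ⧸ F` are each
cyclic or dihedral, and suppose that for every `h ∈ F` generating a characteristic cyclic
subgroup `⟨h⟩` of `F`, every `g ∈ G` conjugates `h` to `h` or `h⁻¹`. Then `G` contains a
normal abelian subgroup of index at most 32. -/
theorem stmt_19 {G : Type*} [Group G] [Finite G] (F : Subgroup G) (hFn : F.Normal)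
    (hF : IsCyclic F ∨ ∃ n, 2 ≤ n ∧ Nonempty (F ≃* DihedralGroup n))
    (hB : IsCyclic (G ⧸ F) ∨ ∃ m, 2 ≤ m ∧ Nonempty ((G ⧸ F) ≃* DihedralGroup m))
    (hconj : ∀ h : F, (Subgroup.zpowers h).Characteristic →
      ∀ g : G, g * (h : G) * g⁻¹ = (h : G) ∨ g * (h : G) * g⁻¹ = (h : G)⁻¹) :
    ∃ N : Subgroup G, N.Normal ∧ IsMulCommutative N ∧ N.index ≤ 32 := by
  obtain ⟨K, hKn, hKi, hFK⟩ := exists_normal_index_le_six_inf_le_centralizer F hF hconj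
  obtain ⟨b, hb⟩ := exists_zpowers_index_le_two (hB.imp_right fun ⟨m, _, e⟩ => ⟨m, e⟩)
  have := normal_of_index_le_two hb
  refine ⟨K ⊓ (zpowers b).comap (QuotientGroup.mk' F), inferInstance,
    isMulCommutative_inf_comap_zpowers hFK b, ?_⟩
  calc _ ≤ K.index * ((zpowers b).comap (QuotientGroup.mk' F)).index := index_inf_le
    _ ≤ 6 * 2 := by
      rw [index_comap_of_surjective _ (QuotientGroup.mk'_surjective F)]
      exact Nat.mul_le_mul hKi hb
    _ ≤ 32 := by norm_num
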